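/- Assume (H) and (Y1). Let r > 0 and h_r ∈ rB_H. Then E( ‖ĥ_r − h_r‖²_{L²(P_n)} ) ≤ 4‖k‖_∞ σ r / n^{1/2} + 4‖h_r − g‖²_{L²(P)}. -/

import Mathlib

open MeasureTheory ProbabilityTheory Real
open scoped BigOperators

/-! Comparing `ĥ` with the midpoint of `ĥ` and `h₀`, which also lies in the ball, the
parallelogram law bounds `‖ĥ - h₀‖²_{L²(P_n)}` by `2 ‖h₀ - g‖²_{L²(P_n)}` plus
`4 r ‖n⁻¹ ∑ εᵢ k_{Xᵢ}‖` for the residuals `εᵢ = Yᵢ - g(Xᵢ)`. The residuals are conditionally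
centred given `Xᵢ`, so by independence the cross terms of `E ‖∑ εᵢ k_{Xᵢ}‖²` vanish and it is at
most `n κ² σ²`; Jensen's inequality turns this into the bound `4 κ σ r / √n` in expectation. -/

noncomputable def ev {S H : Type*} [NormedAddCommGroup H] [InnerProductSpace ℝ H]
    (Φ : S → H) (f : H) (x : S) : ℝ := inner ℝ f (Φ x)

section KernelMeasurability

variable {S E : Type*} [MeasurableSpace S] [NormedAddCommGroup E] [InnerProductSpace ℝ E]
  {Φ : S → E}

lemma measurable_inner_of_mem_span
    (hk : Measurable fun p : S × S => (inner ℝ (Φ p.1) (Φ p.2) : ℝ)) {u : E}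
    (hu : u ∈ Submodule.span ℝ (Set.range Φ)) : Measurable fun x => (inner ℝ u (Φ x) : ℝ) := by
  induction hu using Submodule.span_induction with
  | mem _ hy =>
    obtain ⟨y, rfl⟩ := hy
    exact hk.comp (measurable_const.prodMk measurable_id)
  | zero => simp
  | add _ _ _ _ hv hw => simp only [inner_add_left]; exact hv.add hw
  | smul a _ _ hv => simpa only [real_inner_smul_left] using hv.const_mul a

open UniformSpace in
/-- In the completion, `h` and its projection onto the closed span of `Φ` have the same inner
products with every `Φ x`, and that projection is a limit of elements of the span. -/
lemma measurable_inner_of_measurable_kernel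
    (hk : Measurable fun p : S × S => (inner ℝ (Φ p.1) (Φ p.2) : ℝ)) (h : E) :
    Measurable fun x => (inner ℝ h (Φ x) : ℝ) := by
  set V := Submodule.span ℝ (Set.range Φ)
  set W := V.map (Completion.toComplL (𝕜 := ℝ) (E := E)).toLinearMap
  set K := W.topologicalClosure
  have hΦK : ∀ x, (Φ x : Completion E) ∈ K := fun x =>
    W.le_topologicalClosure (Submodule.mem_map_of_mem (Submodule.subset_span ⟨x, rfl⟩))
  obtain ⟨u, hu, hup⟩ :=
    mem_closure_iff_seq_limit.mp (K.starProjection_apply_mem (h : Completion E))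
  choose v hvV hvu using hu
  refine measurable_of_tendsto_metrizable (fun m => measurable_inner_of_mem_span hk (hvV m))
    (tendsto_pi_nhds.mpr fun x => ?_)
  have hinner : (inner ℝ h (Φ x) : ℝ) =
      inner ℝ (K.starProjection (h : Completion E)) (Φ x : Completion E) := by
    rw [← Completion.inner_coe, ← sub_eq_zero, ← inner_sub_left]
    exact K.starProjection_inner_eq_zero _ _ (hΦK x)
  rw [hinner]
  have hlim := hup.inner (𝕜 := ℝ) (tendsto_const_nhds (x := (Φ x : Completion E)))
  simpa only [← hvu, ContinuousLinearMap.coe_coe, Completion.coe_toComplL,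
    Completion.inner_coe] using hlim

end KernelMeasurability

lemma sum_sq_sub_le_of_sum_sq_le_midpoint {ι : Type*} (s : Finset ι) (a b y g : ι → ℝ)
    (hmin : ∑ i ∈ s, (a i - y i) ^ 2 ≤ ∑ i ∈ s, ((a i + b i) / 2 - y i) ^ 2) :
    ∑ i ∈ s, (a i - b i) ^ 2 ≤
      2 * ∑ i ∈ s, (b i - g i) ^ 2 + 2 * ∑ i ∈ s, (y i - g i) * (a i - b i) := by
  -- the parallelogram law for `a i - y i` and `b i - y i`, and `(a - b)² ≤ 2 (a - g)² + 2 (b - g)²`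
  have hterm : ∀ i ∈ s, (a i - b i) ^ 2 + 2 * (((a i + b i) / 2 - y i) ^ 2 - (a i - y i) ^ 2) ≤
      2 * (b i - g i) ^ 2 + 2 * ((y i - g i) * (a i - b i)) := fun i _ => by
    nlinarith [sq_nonneg (a i + b i - 2 * g i)]
  have hsum := Finset.sum_le_sum hterm
  simp only [Finset.sum_add_distrib, ← Finset.mul_sum, Finset.sum_sub_distrib] at hsum
  linarith

lemma sum_sq_inner_sub_le_of_isMinOn {E ι : Type*} [NormedAddCommGroup E] [InnerProductSpace ℝ E]
    (s : Finset ι) (v : ι → E) (y g : ι → ℝ) {r : ℝ} {u h₀ : E}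
    (hu : IsMinOn (fun f => ∑ i ∈ s, (inner ℝ f (v i) - y i) ^ 2) (Metric.closedBall 0 r) u)
    (hu_mem : u ∈ Metric.closedBall 0 r) (hh₀ : h₀ ∈ Metric.closedBall 0 r) :
    ∑ i ∈ s, (inner ℝ u (v i) - inner ℝ h₀ (v i) : ℝ) ^ 2 ≤
      2 * ∑ i ∈ s, (inner ℝ h₀ (v i) - g i) ^ 2 + 4 * r * ‖∑ i ∈ s, (y i - g i) • v i‖ := by
  rw [mem_closedBall_zero_iff] at hu_mem hh₀
  have hmid : (1 / 2 : ℝ) • (u + h₀) ∈ Metric.closedBall 0 r := by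
    rw [mem_closedBall_zero_iff, norm_smul, Real.norm_of_nonneg (by norm_num)]
    linarith [norm_add_le u h₀]
  have hmid_le : ∑ i ∈ s, (inner ℝ u (v i) - y i) ^ 2 ≤
      ∑ i ∈ s, ((inner ℝ u (v i) + inner ℝ h₀ (v i)) / 2 - y i) ^ 2 := by
    simpa only [real_inner_smul_left, inner_add_left, one_div, inv_mul_eq_div] using
      isMinOn_iff.mp hu _ hmid
  have hcross : ∑ i ∈ s, (y i - g i) * (inner ℝ u (v i) - inner ℝ h₀ (v i) : ℝ) ≤
      2 * r * ‖∑ i ∈ s, (y i - g i) • v i‖ :=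
    calc _ = (inner ℝ (u - h₀) (∑ i ∈ s, (y i - g i) • v i) : ℝ) := by
          simp only [inner_sum, real_inner_smul_right, inner_sub_left, mul_sub]
      _ ≤ ‖u - h₀‖ * ‖∑ i ∈ s, (y i - g i) • v i‖ := real_inner_le_norm _ _
      _ ≤ 2 * r * ‖∑ i ∈ s, (y i - g i) • v i‖ := by
          gcongr; linarith [norm_sub_le u h₀]
  linarith [sum_sq_sub_le_of_sum_sq_le_midpoint s _ _ y g hmid_le]

section ConditionalCentring

variable {Ω S : Type*} [MeasurableSpace Ω] {μ : Measure Ω} [MeasurableSpace S]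

lemma condExp_sub_comp_eq_zero [IsFiniteMeasure μ] {X : Ω → S} {Y : Ω → ℝ} {g : S → ℝ}
    (hX : Measurable X) (hg : Measurable g) (hY : Integrable Y μ)
    (hgX : Integrable (fun ω => g (X ω)) μ)
    (hreg : μ[Y | MeasurableSpace.comap X inferInstance] =ᵐ[μ] fun ω => g (X ω)) :
    μ[fun ω => Y ω - g (X ω) | MeasurableSpace.comap X inferInstance] =ᵐ[μ] 0 := by
  change μ[Y - fun ω => g (X ω) | _] =ᵐ[μ] 0
  have hgX_sm : StronglyMeasurable[MeasurableSpace.comap X inferInstance] fun ω => g (X ω) :=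
    (hg.comp (comap_measurable X)).stronglyMeasurable
  filter_upwards [condExp_sub hY hgX (MeasurableSpace.comap X inferInstance), hreg]
    with ω hsub hω
  rw [hsub, Pi.sub_apply, hω, condExp_of_stronglyMeasurable hX.comap_le hgX_sm hgX, sub_self,
    Pi.zero_apply]

lemma integral_mul_comp_eq_zero_of_condExp_eq_zero [IsFiniteMeasure μ] {X : Ω → S} {ε : Ω → ℝ}
    (hX : Measurable X) (hε : Integrable ε μ)
    (hc : μ[ε | MeasurableSpace.comap X inferInstance] =ᵐ[μ] 0) {f : S → ℝ} (hf : Measurable f)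
    {C : ℝ} (hfC : ∀ x, |f x| ≤ C) :
    ∫ ω, ε ω * f (X ω) ∂μ = 0 := by
  have hfX_sm : StronglyMeasurable[MeasurableSpace.comap X inferInstance] fun ω => f (X ω) :=
    (hf.comp (comap_measurable X)).stronglyMeasurable
  have hint : Integrable (ε * fun ω => f (X ω)) μ :=
    hε.mul_bdd (hf.comp hX).aestronglyMeasurable (ae_of_all _ fun ω => hfC (X ω))
  calc ∫ ω, ε ω * f (X ω) ∂μ
      = ∫ ω, (μ[ε * (fun ω => f (X ω)) | MeasurableSpace.comap X inferInstance]) ω ∂μ :=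
        (integral_condExp hX.comap_le).symm
    _ = 0 := by
        rw [integral_congr_ae ((condExp_mul_of_stronglyMeasurable_right hfX_sm hint hε).trans
          (hc.mul (ae_eq_refl _)))]
        simp

/-- Fubini: integrating out the second pair first kills the integrand. -/
lemma integral_mul_mul_kernel_eq_zero [IsFiniteMeasure μ] {X X' : Ω → S} {ε ε' : Ω → ℝ}
    (hX : Measurable X) (hX' : Measurable X') (hε : Measurable ε) (hε' : Measurable ε')
    (hind : IndepFun (fun ω => (X ω, ε ω)) (fun ω => (X' ω, ε' ω)) μ)
    (hεi : Integrable ε μ) (hεi' : Integrable ε' μ)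
    (hc : μ[ε' | MeasurableSpace.comap X' inferInstance] =ᵐ[μ] 0)
    {K : S × S → ℝ} (hK : Measurable K) {C : ℝ} (hKC : ∀ p, |K p| ≤ C) :
    ∫ ω, ε ω * ε' ω * K (X ω, X' ω) ∂μ = 0 := by
  set ν := μ.map fun ω => (X ω, ε ω)
  set ν' := μ.map fun ω => (X' ω, ε' ω)
  have hZ := (hX.prodMk hε).aemeasurable (μ := μ)
  have hZ' := (hX'.prodMk hε').aemeasurable (μ := μ)
  set F : (S × ℝ) × (S × ℝ) → ℝ := fun p => p.1.2 * p.2.2 * K (p.1.1, p.2.1)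
  have hFm : Measurable F := by fun_prop
  have hlaw : μ.map (fun ω => ((X ω, ε ω), (X' ω, ε' ω))) = ν.prod ν' :=
    (indepFun_iff_map_prod_eq_prod_map_map hZ hZ').mp hind
  have hFi : Integrable F (ν.prod ν') := by
    have hsnd : Integrable (fun z : S × ℝ => z.2) ν :=
      (integrable_map_measure measurable_snd.aestronglyMeasurable hZ).mpr hεi
    have hsnd' : Integrable (fun z : S × ℝ => z.2) ν' :=
      (integrable_map_measure measurable_snd.aestronglyMeasurable hZ').mpr hεi'
    exact (hsnd.mul_prod hsnd').mul_bdd (hK.comp (by fun_prop)).aestronglyMeasurable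
      (ae_of_all _ fun p => (Real.norm_eq_abs _).trans_le (hKC (p.1.1, p.2.1)))
  have hinner : ∀ z : S × ℝ, ∫ z', F (z, z') ∂ν' = 0 := fun z => by
    have hKz : Measurable fun x => K (z.1, x) := hK.comp (by fun_prop)
    rw [integral_map (f := fun z' => F (z, z')) hZ'
      (hFm.comp measurable_prodMk_left).aestronglyMeasurable]
    simp only [F, mul_assoc, integral_const_mul]
    rw [integral_mul_comp_eq_zero_of_condExp_eq_zero hX' hεi' hc hKz (fun x => hKC _), mul_zero]
  calc ∫ ω, ε ω * ε' ω * K (X ω, X' ω) ∂μ = ∫ p, F p ∂(ν.prod ν') := by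
        rw [← hlaw, integral_map (hZ.prodMk hZ') hFm.aestronglyMeasurable]
    _ = 0 := by simp only [integral_prod F hFi, hinner, integral_zero]

end ConditionalCentring

lemma norm_sum_smul_sq {E ι : Type*} [NormedAddCommGroup E] [InnerProductSpace ℝ E]
    (s : Finset ι) (c : ι → ℝ) (v : ι → E) :
    ‖∑ i ∈ s, c i • v i‖ ^ 2 = ∑ i ∈ s, ∑ j ∈ s, c i * c j * (inner ℝ (v i) (v j) : ℝ) := by
  simp only [← real_inner_self_eq_norm_sq, sum_inner, inner_sum, real_inner_smul_left,
    real_inner_smul_right]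
  exact Finset.sum_congr rfl fun i _ => Finset.sum_congr rfl fun j _ => by
    rw [real_inner_comm]; ring

lemma abs_inner_le_sq {E : Type*} [NormedAddCommGroup E] [InnerProductSpace ℝ E] {κ : ℝ}
    {a b : E} (ha : ‖a‖ ≤ κ) (hb : ‖b‖ ≤ κ) : |(inner ℝ a b : ℝ)| ≤ κ ^ 2 :=
  (abs_real_inner_le_norm a b).trans <| by
    rw [sq]; exact mul_le_mul ha hb (norm_nonneg _) ((norm_nonneg _).trans ha)

lemma integral_le_of_condExp_le {Ω : Type*} {m m₀ : MeasurableSpace Ω} {μ : Measure Ω}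
    [IsProbabilityMeasure μ] (hm : m ≤ m₀) {f : Ω → ℝ} {c : ℝ} (hf : μ[f | m] ≤ᵐ[μ] fun _ => c) :
    ∫ ω, f ω ∂μ ≤ c := by
  rw [← integral_condExp hm]
  simpa using integral_mono_ae integrable_condExp (integrable_const c) hf

section SecondMoment

variable {Ω S E ι : Type*} [MeasurableSpace Ω] {μ : Measure Ω} [MeasurableSpace S]
  [NormedAddCommGroup E] [InnerProductSpace ℝ E] {Φ : S → E} {κ : ℝ} {X : ι → Ω → S}
  {ε : ι → Ω → ℝ}

lemma integrable_mul_mul_inner (hκ : ∀ x, ‖Φ x‖ ≤ κ)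
    (hk : Measurable fun p : S × S => (inner ℝ (Φ p.1) (Φ p.2) : ℝ))
    (hX : ∀ i, Measurable (X i)) (hε : ∀ i, MemLp (ε i) 2 μ) (i j : ι) :
    Integrable (fun ω => ε i ω * ε j ω * (inner ℝ (Φ (X i ω)) (Φ (X j ω)) : ℝ)) μ :=
  ((hε i).integrable_mul (hε j)).mul_bdd (hk.comp ((hX i).prodMk (hX j))).aestronglyMeasurable
    (ae_of_all _ fun _ => (Real.norm_eq_abs _).trans_le (abs_inner_le_sq (hκ _) (hκ _)))

/-- `Φ` need not be measurable: measurability of the norm comes from the kernel expansion of its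
square. -/
lemma memLp_two_norm_sum_smul [Fintype ι] (hκ : ∀ x, ‖Φ x‖ ≤ κ)
    (hk : Measurable fun p : S × S => (inner ℝ (Φ p.1) (Φ p.2) : ℝ))
    (hX : ∀ i, Measurable (X i)) (hεm : ∀ i, Measurable (ε i)) (hε : ∀ i, MemLp (ε i) 2 μ) :
    MemLp (fun ω => ‖∑ i, ε i ω • Φ (X i ω)‖) 2 μ := by
  have hsq : (fun ω => ‖∑ i, ε i ω • Φ (X i ω)‖ ^ 2) = fun ω =>
      ∑ i, ∑ j, ε i ω * ε j ω * (inner ℝ (Φ (X i ω)) (Φ (X j ω)) : ℝ) :=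
    funext fun ω => norm_sum_smul_sq _ _ _
  have hm : Measurable fun ω => ‖∑ i, ε i ω • Φ (X i ω)‖ := by
    have hsqrt := (hsq ▸ (Finset.measurable_sum _ fun i _ => Finset.measurable_sum _ fun j _ =>
      ((hεm i).mul (hεm j)).mul (hk.comp ((hX i).prodMk (hX j)))) :
      Measurable fun ω => ‖∑ i, ε i ω • Φ (X i ω)‖ ^ 2).sqrt
    simpa only [Real.sqrt_sq (norm_nonneg _)] using hsqrt
  refine (memLp_two_iff_integrable_sq hm.aestronglyMeasurable).mpr ?_
  rw [hsq]
  exact integrable_finsetSum _ fun i _ => integrable_finsetSum _ fun j _ =>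
    integrable_mul_mul_inner hκ hk hX hε i j

/-- Only the diagonal survives: off-diagonal terms vanish by independence and centring. -/
lemma integral_norm_sum_smul_sq_le [IsFiniteMeasure μ] [Fintype ι] {σ : ℝ}
    (hκ : ∀ x, ‖Φ x‖ ≤ κ)
    (hk : Measurable fun p : S × S => (inner ℝ (Φ p.1) (Φ p.2) : ℝ))
    (hX : ∀ i, Measurable (X i)) (hεm : ∀ i, Measurable (ε i))
    (hind : iIndepFun (fun i ω => (X i ω, ε i ω)) μ) (hε : ∀ i, MemLp (ε i) 2 μ)
    (hc : ∀ i, μ[ε i | MeasurableSpace.comap (X i) inferInstance] =ᵐ[μ] 0)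
    (hvar : ∀ i, ∫ ω, ε i ω ^ 2 ∂μ ≤ σ ^ 2) :
    ∫ ω, ‖∑ i, ε i ω • Φ (X i ω)‖ ^ 2 ∂μ ≤ Fintype.card ι * (κ ^ 2 * σ ^ 2) := by
  have hpair := integrable_mul_mul_inner hκ hk hX hε
  have hdiag : ∀ i, ∫ ω, ε i ω * ε i ω * (inner ℝ (Φ (X i ω)) (Φ (X i ω)) : ℝ) ∂μ
      ≤ κ ^ 2 * σ ^ 2 := fun i =>
    calc _ ≤ ∫ ω, κ ^ 2 * ε i ω ^ 2 ∂μ :=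
          integral_mono (hpair i i) ((hε i).integrable_sq.const_mul _) fun ω => by
            rw [← sq, mul_comm]
            exact mul_le_mul_of_nonneg_right (le_of_abs_le (abs_inner_le_sq (hκ _) (hκ _)))
              (sq_nonneg _)
      _ ≤ κ ^ 2 * σ ^ 2 := by rw [integral_const_mul]; gcongr; exact hvar i
  calc ∫ ω, ‖∑ i, ε i ω • Φ (X i ω)‖ ^ 2 ∂μ
      = ∑ i, ∑ j, ∫ ω, ε i ω * ε j ω * (inner ℝ (Φ (X i ω)) (Φ (X j ω)) : ℝ) ∂μ := by
        simp only [norm_sum_smul_sq]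
        rw [integral_finsetSum _ fun i _ => integrable_finsetSum _ fun j _ => hpair i j]
        exact Finset.sum_congr rfl fun i _ => integral_finsetSum _ fun j _ => hpair i j
    _ = ∑ i, ∫ ω, ε i ω * ε i ω * (inner ℝ (Φ (X i ω)) (Φ (X i ω)) : ℝ) ∂μ := by
        refine Finset.sum_congr rfl fun i _ =>
          Finset.sum_eq_single i (fun j _ hji => ?_) (by simp)
        exact integral_mul_mul_kernel_eq_zero (hX i) (hX j) (hεm i) (hεm j)
          (hind.indepFun hji.symm) ((hε i).integrable one_le_two) ((hε j).integrable one_le_two)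
          (hc j) hk fun p => abs_inner_le_sq (hκ _) (hκ _)
    _ ≤ Fintype.card ι * (κ ^ 2 * σ ^ 2) := by
        simpa using Finset.sum_le_sum fun i (_ : i ∈ Finset.univ) => hdiag i

lemma integral_norm_sum_smul_le [IsProbabilityMeasure μ] [Fintype ι] {σ : ℝ}
    (hκ0 : 0 ≤ κ) (hσ : 0 ≤ σ) (hκ : ∀ x, ‖Φ x‖ ≤ κ)
    (hk : Measurable fun p : S × S => (inner ℝ (Φ p.1) (Φ p.2) : ℝ))
    (hX : ∀ i, Measurable (X i)) (hεm : ∀ i, Measurable (ε i))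
    (hind : iIndepFun (fun i ω => (X i ω, ε i ω)) μ) (hε : ∀ i, MemLp (ε i) 2 μ)
    (hc : ∀ i, μ[ε i | MeasurableSpace.comap (X i) inferInstance] =ᵐ[μ] 0)
    (hvar : ∀ i, ∫ ω, ε i ω ^ 2 ∂μ ≤ σ ^ 2) :
    ∫ ω, ‖∑ i, ε i ω • Φ (X i ω)‖ ∂μ ≤ √(Fintype.card ι) * κ * σ := by
  have hN := memLp_two_norm_sum_smul hκ hk hX hεm hε
  have hjensen := variance_nonneg (fun ω => ‖∑ i, ε i ω • Φ (X i ω)‖) μ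
  rw [variance_eq_sub hN] at hjensen
  have hsq := integral_norm_sum_smul_sq_le hκ hk hX hεm hind hε hc hvar
  calc ∫ ω, ‖∑ i, ε i ω • Φ (X i ω)‖ ∂μ ≤ √(Fintype.card ι * (κ ^ 2 * σ ^ 2)) :=
        (le_abs_self _).trans <| Real.abs_le_sqrt <| by
          simp only [Pi.pow_apply] at hjensen; linarith
    _ = √(Fintype.card ι) * κ * σ := by
        rw [Real.sqrt_mul (Nat.cast_nonneg _), ← mul_pow, Real.sqrt_sq (by positivity), mul_assoc]

end SecondMoment

section EmpiricalMean

variable {Ω S : Type*} [MeasurableSpace Ω] {μ : Measure Ω} [MeasurableSpace S] {P : Measure S}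

lemma integrable_sq_inner_sub {E : Type*} [NormedAddCommGroup E] [InnerProductSpace ℝ E]
    [IsFiniteMeasure P] {Φ : S → E} {κ : ℝ} (hκ : ∀ x, ‖Φ x‖ ≤ κ)
    (hk : Measurable fun p : S × S => (inner ℝ (Φ p.1) (Φ p.2) : ℝ)) {g : S → ℝ}
    (hg : MemLp g 2 P) (h : E) :
    Integrable (fun x => ((inner ℝ h (Φ x) : ℝ) - g x) ^ 2) P := by
  have hbound : MemLp (fun x => (inner ℝ h (Φ x) : ℝ)) 2 P :=
    MemLp.of_bound (measurable_inner_of_measurable_kernel hk h).aestronglyMeasurable (‖h‖ * κ)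
      (ae_of_all _ fun x => (Real.norm_eq_abs _).trans_le <| (abs_real_inner_le_norm _ _).trans
        (mul_le_mul_of_nonneg_left (hκ x) (norm_nonneg h)))
  exact (hbound.sub hg).integrable_sq

lemma integral_empiricalMean_comp {n : ℕ} (hn : 0 < n) {X : Fin n → Ω → S}
    (hX : ∀ i, Measurable (X i)) (hXP : ∀ i, μ.map (X i) = P) {q : S → ℝ}
    (hq : Integrable q P) :
    Integrable (fun ω => (1 / n : ℝ) * ∑ i, q (X i ω)) μ ∧
      ∫ ω, (1 / n : ℝ) * ∑ i, q (X i ω) ∂μ = ∫ x, q x ∂P := by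
  have hqX : ∀ i, Integrable (fun ω => q (X i ω)) μ := fun i =>
    (integrable_map_measure (hXP i ▸ hq.aestronglyMeasurable) (hX i).aemeasurable).mp
      (hXP i ▸ hq)
  refine ⟨(integrable_finsetSum _ fun i _ => hqX i).const_mul _, ?_⟩
  have hqX_eq : ∀ i, ∫ ω, q (X i ω) ∂μ = ∫ x, q x ∂P := fun i => by
    rw [← hXP i, integral_map (hX i).aemeasurable (hXP i ▸ hq.aestronglyMeasurable)]
  rw [integral_const_mul, integral_finsetSum _ fun i _ => hqX i]
  simp only [hqX_eq, Finset.sum_const, Finset.card_univ, Fintype.card_fin, nsmul_eq_mul]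
  field_simp

end EmpiricalMean

lemma integral_norm_sum_residual_smul_le {Ω S E : Type*} [MeasurableSpace Ω] {μ : Measure Ω}
    [IsProbabilityMeasure μ] [MeasurableSpace S] {P : Measure S} [NormedAddCommGroup E]
    [InnerProductSpace ℝ E] {Φ : S → E} {κ σ : ℝ} (hκ0 : 0 ≤ κ) (hσ : 0 ≤ σ)
    (hκ : ∀ x, ‖Φ x‖ ≤ κ) (hk : Measurable fun p : S × S => (inner ℝ (Φ p.1) (Φ p.2) : ℝ))
    {n : ℕ} {X : Fin n → Ω → S} {Y : Fin n → Ω → ℝ} (hX : ∀ i, Measurable (X i))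
    (hY : ∀ i, Measurable (Y i)) (hind : iIndepFun (fun i ω => (X i ω, Y i ω)) μ)
    (hXP : ∀ i, μ.map (X i) = P) (hYsq : ∀ i, Integrable (fun ω => (Y i ω) ^ 2) μ)
    {g : S → ℝ} (hg : Measurable g) (hgL2 : MemLp g 2 P)
    (hreg : ∀ i, μ[Y i | MeasurableSpace.comap (X i) inferInstance] =ᵐ[μ] fun ω => g (X i ω))
    (hvar : ∀ i, ∀ᵐ ω ∂μ,
      (μ[fun ω' => (Y i ω' - g (X i ω')) ^ 2 | MeasurableSpace.comap (X i) inferInstance]) ω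
        ≤ σ ^ 2) :
    Integrable (fun ω => ‖∑ i, (Y i ω - g (X i ω)) • Φ (X i ω)‖) μ ∧
      ∫ ω, ‖∑ i, (Y i ω - g (X i ω)) • Φ (X i ω)‖ ∂μ ≤ √n * κ * σ := by
  have hgX : ∀ i, MemLp (fun ω => g (X i ω)) 2 μ := fun i =>
    (memLp_map_measure_iff (hXP i ▸ hg.aestronglyMeasurable) (hX i).aemeasurable).mp
      (hXP i ▸ hgL2)
  have hYL2 : ∀ i, MemLp (Y i) 2 μ := fun i =>
    (memLp_two_iff_integrable_sq (hY i).aestronglyMeasurable).mpr (hYsq i)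
  have hεm : ∀ i, Measurable fun ω => Y i ω - g (X i ω) := fun i => (hY i).sub (hg.comp (hX i))
  have hε : ∀ i, MemLp (fun ω => Y i ω - g (X i ω)) 2 μ := fun i => (hYL2 i).sub (hgX i)
  have hindε : iIndepFun (fun i ω => (X i ω, Y i ω - g (X i ω))) μ :=
    hind.comp (fun _ p => (p.1, p.2 - g p.1)) fun _ => by fun_prop
  have hc := fun i => condExp_sub_comp_eq_zero (hX i) hg ((hYL2 i).integrable one_le_two)
    ((hgX i).integrable one_le_two) (hreg i)
  have hvar' := fun i => integral_le_of_condExp_le (hX i).comap_le (hvar i)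
  refine ⟨(memLp_two_norm_sum_smul hκ hk hX hεm hε).integrable one_le_two, ?_⟩
  simpa using integral_norm_sum_smul_le hκ0 hσ hκ hk hX hεm hindε hε hc hvar'

theorem expected_empirical_norm_bound_general
    (Ω : Type*) [MeasurableSpace Ω] (μ : Measure Ω) [IsProbabilityMeasure μ]
    (S : Type*) [MeasurableSpace S] (P : Measure S) [IsProbabilityMeasure P]
    (H : Type*) [NormedAddCommGroup H] [InnerProductSpace ℝ H]
    (Φ : S → H) (κ : ℝ) (hκ0 : 0 ≤ κ) (hκ : ∀ x, ‖Φ x‖ ≤ κ)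
    (hkmeas : Measurable fun p : S × S => (inner ℝ (Φ p.1) (Φ p.2) : ℝ))
    (n : ℕ) (hn : 0 < n)
    (X : Fin n → Ω → S) (Y : Fin n → Ω → ℝ)
    (hXm : ∀ i, Measurable (X i)) (hYm : ∀ i, Measurable (Y i))
    (hiid : iIndepFun (fun i ω => (X i ω, Y i ω)) μ)
    (hPX : ∀ i, Measure.map (X i) μ = P)
    (hYsq : ∀ i, Integrable (fun ω => (Y i ω)^2) μ)
    (g : S → ℝ) (hgm : Measurable g) (hgL2 : MemLp g 2 P)
    (hreg : ∀ i, μ[Y i | MeasurableSpace.comap (X i) inferInstance] =ᵐ[μ] fun ω => g (X i ω))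
    (σ : ℝ) (hσ : 0 ≤ σ)
    (hY1 : ∀ i, ∀ᵐ ω ∂μ,
      (μ[fun ω' => (Y i ω' - g (X i ω'))^2 | MeasurableSpace.comap (X i) inferInstance]) ω ≤ σ^2)
    (r : ℝ) (hr : 0 < r) (hhat : Ω → H)
    (hball : ∀ ω, ‖hhat ω‖ ≤ r)
    (hmin : ∀ ω, ∀ f : H, ‖f‖ ≤ r →
      (1 / n : ℝ) * ∑ i, (ev Φ (hhat ω) (X i ω) - Y i ω)^2 ≤
      (1 / n : ℝ) * ∑ i, (ev Φ f (X i ω) - Y i ω)^2)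
    (h₀ : H) (hh₀ : ‖h₀‖ ≤ r) :
    ∫ ω, ((1 / n : ℝ) * ∑ i, (ev Φ (hhat ω) (X i ω) - ev Φ h₀ (X i ω))^2) ∂μ ≤
      4 * κ * σ * r / Real.sqrt (n : ℝ) + 4 * ∫ x, (ev Φ h₀ x - g x)^2 ∂P := by
  obtain ⟨hqX_int, hqX⟩ := integral_empiricalMean_comp hn hXm hPX
    (q := fun x => (ev Φ h₀ x - g x) ^ 2) (integrable_sq_inner_sub hκ hkmeas hgL2 h₀)
  obtain ⟨hN_int, hN⟩ := integral_norm_sum_residual_smul_le hκ0 hσ hκ hkmeas hXm hYm hiid hPX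
    hYsq hgm hgL2 hreg hY1
  set N : Ω → ℝ := fun ω => ‖∑ i, (Y i ω - g (X i ω)) • Φ (X i ω)‖
  set q : S → ℝ := fun x => (ev Φ h₀ x - g x) ^ 2
  have hpointwise : ∀ ω, (1 / n : ℝ) * ∑ i, (ev Φ (hhat ω) (X i ω) - ev Φ h₀ (X i ω)) ^ 2 ≤
      2 * ((1 / n : ℝ) * ∑ i, q (X i ω)) + 4 * r / n * N ω := fun ω => by
    have hmin' : IsMinOn (fun f => ∑ i, (inner ℝ f (Φ (X i ω)) - Y i ω) ^ 2)
        (Metric.closedBall 0 r) (hhat ω) := fun f hf =>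
      le_of_mul_le_mul_left (hmin ω f (mem_closedBall_zero_iff.mp hf)) (by positivity)
    have hbasic := sum_sq_inner_sub_le_of_isMinOn Finset.univ (fun i => Φ (X i ω)) (fun i => Y i ω)
      (fun i => g (X i ω)) hmin' (mem_closedBall_zero_iff.mpr (hball ω))
      (mem_closedBall_zero_iff.mpr hh₀)
    calc _ ≤ (1 / n : ℝ) * (2 * ∑ i, q (X i ω) + 4 * r * N ω) := by gcongr; exact hbasic
      _ = _ := by ring
  calc _ ≤ ∫ ω, (2 * ((1 / n : ℝ) * ∑ i, q (X i ω)) + 4 * r / n * N ω) ∂μ :=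
        integral_mono_of_nonneg (ae_of_all _ fun ω => by positivity)
          ((hqX_int.const_mul 2).add (hN_int.const_mul _)) (ae_of_all _ hpointwise)
    _ = 2 * ∫ x, q x ∂P + 4 * r / n * ∫ ω, N ω ∂μ := by
        rw [integral_add (hqX_int.const_mul 2) (hN_int.const_mul _), integral_const_mul 2, hqX,
          integral_const_mul]
    _ ≤ 2 * ∫ x, q x ∂P + 4 * r / n * (√n * κ * σ) := by gcongr
    _ ≤ 4 * κ * σ * r / √n + 4 * ∫ x, q x ∂P := by
        have hnoise : 4 * r / n * (√n * κ * σ) = 4 * κ * σ * r / √n := by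
          have hsqrt : 0 < √(n : ℝ) := Real.sqrt_pos.mpr (by exact_mod_cast hn)
          field_simp
          rw [Real.sq_sqrt n.cast_nonneg]
        linarith [(integral_nonneg fun x => sq_nonneg _ : 0 ≤ ∫ x, q x ∂P)]

theorem expected_empirical_norm_bound
    (Ω : Type*) [MeasurableSpace Ω] (μ : Measure Ω) [IsProbabilityMeasure μ]
    (S : Type*) [MeasurableSpace S] (P : Measure S) [IsProbabilityMeasure P]
    (H : Type*) [NormedAddCommGroup H] [InnerProductSpace ℝ H]
    [SecondCountableTopology H] [MeasurableSpace H] [BorelSpace H]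
    (Φ : S → H) (κ : ℝ) (hκ0 : 0 ≤ κ) (hκ : ∀ x, ‖Φ x‖ ≤ κ)
    (hkmeas : Measurable fun p : S × S => (inner ℝ (Φ p.1) (Φ p.2) : ℝ))
    (n : ℕ) (hn : 0 < n)
    (X : Fin n → Ω → S) (Y : Fin n → Ω → ℝ)
    (hXm : ∀ i, Measurable (X i)) (hYm : ∀ i, Measurable (Y i))
    (hiid : iIndepFun (fun i ω => (X i ω, Y i ω)) μ)
    (Q : Measure (S × ℝ)) (hQ : ∀ i, Measure.map (fun ω => (X i ω, Y i ω)) μ = Q)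
    (hPX : ∀ i, Measure.map (X i) μ = P)
    (hYsq : ∀ i, Integrable (fun ω => (Y i ω)^2) μ)
    (g : S → ℝ) (hgm : Measurable g) (hgL2 : MemLp g 2 P)
    (hreg : ∀ i, μ[Y i | MeasurableSpace.comap (X i) inferInstance] =ᵐ[μ] fun ω => g (X i ω))
    (σ : ℝ) (hσ : 0 ≤ σ)
    (hY1 : ∀ i, ∀ᵐ ω ∂μ,
      (μ[fun ω' => (Y i ω' - g (X i ω'))^2 | MeasurableSpace.comap (X i) inferInstance]) ω ≤ σ^2)
    (r : ℝ) (hr : 0 < r) (hhat : Ω → H) (hhatm : Measurable hhat)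
    (hball : ∀ ω, ‖hhat ω‖ ≤ r)
    (hmin : ∀ ω, ∀ f : H, ‖f‖ ≤ r →
      (1 / n : ℝ) * ∑ i, (ev Φ (hhat ω) (X i ω) - Y i ω)^2 ≤
      (1 / n : ℝ) * ∑ i, (ev Φ f (X i ω) - Y i ω)^2)
    (h₀ : H) (hh₀ : ‖h₀‖ ≤ r) :
    ∫ ω, ((1 / n : ℝ) * ∑ i, (ev Φ (hhat ω) (X i ω) - ev Φ h₀ (X i ω))^2) ∂μ ≤
      4 * κ * σ * r / Real.sqrt (n : ℝ) + 4 * ∫ x, (ev Φ h₀ x - g x)^2 ∂P :=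
  expected_empirical_norm_bound_general Ω μ S P H Φ κ hκ0 hκ hkmeas n hn X Y hXm hYm hiid hPX hYsq g
    hgm hgL2 hreg σ hσ hY1 r hr hhat hball hmin h₀ hh₀
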